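/- Let α_v : [0,∞) → [0,∞) be continuous, strictly increasing, unbounded with α_v(0)=0 (i.e. α_v ∈ 𝒦∞). Define λ₁(s) := s − α_v(s) + α_v(s/2) and λ(s) := (1/2)·(s + max_{s' ∈ [0,s]} λ₁(s')). Then λ ∈ 𝒦∞ (λ is continuous, strictly increasing, unbounded and λ(0)=0), and for every s > 0 one has λ₁(s) ≤ λ(s) < s. -/

import Mathlib

open Filter

noncomputable section

/-- Class 𝒦: continuous, strictly increasing on `[0,∞)`, vanishing at `0`, nonnegative. -/
def IsClassK (h : ℝ → ℝ) : Prop :=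
  ContinuousOn h (Set.Ici 0) ∧ StrictMonoOn h (Set.Ici 0) ∧ h 0 = 0 ∧ ∀ r, 0 ≤ r → 0 ≤ h r

/-- Class 𝒦∞: class 𝒦 and unbounded. -/
def IsKInfty (h : ℝ → ℝ) : Prop :=
  IsClassK h ∧ Tendsto h atTop atTop

/-- `λ₁(s) = s − α_v(s) + α_v(s/2)`. -/
noncomputable def lam1 (αv : ℝ → ℝ) (s : ℝ) : ℝ := s - αv s + αv (s / 2)

/-- `λ(s) = (1/2)(s + max_{s' ∈ [0,s]} λ₁(s'))`. -/
noncomputable def lam (αv : ℝ → ℝ) (s : ℝ) : ℝ :=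
  (1 / 2) * (s + sSup (lam1 αv '' Set.Icc 0 s))

theorem lam_is_KInfty_and_contraction (αv : ℝ → ℝ) (hαv : IsKInfty αv) :
    IsKInfty (lam αv) ∧ ∀ s : ℝ, 0 < s → lam1 αv s ≤ lam αv s ∧ lam αv s < s := by
  obtain ⟨⟨hc, hmono, h0, hnn⟩, _htop⟩ := hαv
  -- continuity of lam1 on [0,∞)
  have h1c : ContinuousOn (lam1 αv) (Set.Ici 0) := by
    have h2 : ContinuousOn (fun s : ℝ => αv (s / 2)) (Set.Ici 0) := by
      apply hc.comp (continuousOn_id.div_const 2)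
      intro x hx
      have h := Set.mem_Ici.1 hx
      simp only [id]
      exact Set.mem_Ici.2 (by linarith)
    exact (continuousOn_id.sub hc).add h2
  have h10 : lam1 αv 0 = 0 := by simp [lam1, h0]
  -- lam1 x < s for x ∈ [0,s], s > 0 ; and lam1 x ≤ x for x ≥ 0
  have h1le : ∀ x : ℝ, 0 ≤ x → lam1 αv x ≤ x := by
    intro x hx
    rcases eq_or_lt_of_le hx with h | h
    · simp [← h, h10]
    · have : αv (x / 2) < αv x :=
        hmono (Set.mem_Ici.2 (by linarith)) (Set.mem_Ici.2 (by linarith)) (by linarith)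
      simp only [lam1]; linarith
  have h1lt : ∀ x : ℝ, 0 < x → lam1 αv x < x := by
    intro x hx
    have : αv (x / 2) < αv x := hmono (Set.mem_Ici.2 (by linarith)) (Set.mem_Ici.2 (by linarith)) (by linarith)
    simp only [lam1]; linarith
  -- basic facts about M s := sSup (lam1 '' [0,s])
  set M : ℝ → ℝ := fun s => sSup (lam1 αv '' Set.Icc 0 s) with hM
  have hne : ∀ s : ℝ, 0 ≤ s → (lam1 αv '' Set.Icc 0 s).Nonempty :=
    fun s hs => ⟨lam1 αv 0, Set.mem_image_of_mem _ (Set.mem_Icc.2 ⟨le_refl 0, hs⟩)⟩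
  have hbdd : ∀ s : ℝ, BddAbove (lam1 αv '' Set.Icc 0 s) := by
    intro s
    exact (isCompact_Icc.image_of_continuousOn
      (h1c.mono Set.Icc_subset_Ici_self)).bddAbove
  have hMnn : ∀ s : ℝ, 0 ≤ s → 0 ≤ M s := by
    intro s hs
    have := le_csSup (hbdd s) (Set.mem_image_of_mem (lam1 αv)
      (Set.mem_Icc.2 ⟨le_refl 0, hs⟩))
    rwa [h10] at this
  have hMmono : ∀ s t : ℝ, 0 ≤ s → s ≤ t → M s ≤ M t := by
    intro s t hs hst
    exact csSup_le_csSup (hbdd t) (hne s hs)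
      (Set.image_mono (Set.Icc_subset_Icc_right hst))
  have hMlt : ∀ s : ℝ, 0 < s → M s < s := by
    intro s hs
    rw [hM]
    rw [isCompact_Icc.sSup_lt_iff_of_continuous
      (Set.nonempty_Icc.2 (le_of_lt hs)) (h1c.mono Set.Icc_subset_Ici_self)]
    intro x hx
    rcases eq_or_lt_of_le hx.1 with h | h
    · simpa [← h, h10] using hs
    · exact lt_of_lt_of_le (h1lt x h) hx.2
  have hM0 : M 0 = 0 := by
    rw [hM]
    simp only [Set.Icc_self, Set.image_singleton, h10, csSup_singleton]
  -- continuity of M on [0,∞) via a globally continuous reparametrization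
  have hL : Continuous (fun x : ℝ => lam1 αv (max x 0)) := by
    apply h1c.comp_continuous (continuous_id.max continuous_const)
    intro x; exact Set.mem_Ici.2 (le_max_right x 0)
  have hF : Continuous (fun s : ℝ =>
      sSup ((fun t : ℝ => lam1 αv (max (t * s) 0)) '' Set.Icc 0 1)) := by
    apply isCompact_Icc.continuous_sSup
      (f := fun s t : ℝ => lam1 αv (max (t * s) 0))
    exact hL.comp (continuous_snd.mul continuous_fst)
  have hFM : ∀ s : ℝ, 0 ≤ s →
      sSup ((fun t : ℝ => lam1 αv (max (t * s) 0)) '' Set.Icc 0 1) = M s := by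
    intro s hs
    have himg : (fun t : ℝ => t * s) '' Set.Icc 0 1 = Set.Icc 0 s := by
      rw [Set.image_mul_right_Icc zero_le_one hs]; simp
    have : (fun t : ℝ => lam1 αv (max (t * s) 0)) '' Set.Icc 0 1
        = (fun x : ℝ => lam1 αv (max x 0)) '' Set.Icc 0 s := by
      rw [← himg, ← Set.image_image (fun x => lam1 αv (max x 0)) (fun t => t * s)]
    rw [this, hM]
    congr 1
    apply Set.image_congr
    intro x hx
    rw [max_eq_left hx.1]
  have hlamc : ContinuousOn (lam αv) (Set.Ici 0) := by
    apply ContinuousOn.congr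
      (f := fun s : ℝ => (1 / 2) *
        (s + sSup ((fun t : ℝ => lam1 αv (max (t * s) 0)) '' Set.Icc 0 1)))
    · exact (continuous_const.mul (continuous_id.add hF)).continuousOn
    · intro s hs
      simp only
      rw [lam, hFM s hs]
  -- strict monotonicity
  have hlmono : StrictMonoOn (lam αv) (Set.Ici 0) := by
    intro s hs t _ht hst
    simp only [lam]
    have h1 := hMmono s t hs (le_of_lt hst)
    have : s + M s < t + M t := add_lt_add_of_lt_of_le hst h1
    linarith
  have hlam0 : lam αv 0 = 0 := by
    rw [lam]; rw [show sSup (lam1 αv '' Set.Icc 0 0) = M 0 from rfl, hM0]; ring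
  have hlge : ∀ s : ℝ, 0 ≤ s → s / 2 ≤ lam αv s := by
    intro s hs
    have := hMnn s hs
    simp only [lam]
    rw [show sSup (lam1 αv '' Set.Icc 0 s) = M s from rfl]
    linarith
  refine ⟨⟨⟨hlamc, hlmono, hlam0, fun r hr => le_trans (by positivity) (hlge r hr)⟩, ?_⟩,
    fun s hs => ⟨?_, ?_⟩⟩
  · refine tendsto_atTop_mono' atTop ?_ (tendsto_id.atTop_div_const (by norm_num : (0:ℝ) < 2))
    filter_upwards [eventually_ge_atTop (0 : ℝ)] with s hs
    simpa using hlge s hs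
  · have h1 : lam1 αv s ≤ M s := le_csSup (hbdd s)
      (Set.mem_image_of_mem _ (Set.mem_Icc.2 ⟨le_of_lt hs, le_refl s⟩))
    have h2 := h1le s (le_of_lt hs)
    simp only [lam]
    rw [show sSup (lam1 αv '' Set.Icc 0 s) = M s from rfl]
    linarith
  · have := hMlt s hs
    simp only [lam]
    rw [show sSup (lam1 αv '' Set.Icc 0 s) = M s from rfl]
    linarith

end
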